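/- Let f(η) = h(η/2) − h((1−η)/2). Let I be a finite index set, let (v_i)_{i∈I} be nonnegative reals with Σ_i v_i = 1, let (α_i)_{i∈I} be reals in [0,1], and set η = Σ_i v_i·α_i. If η ≤ 1/5, then Σ_i v_i·f(α_i) ≤ f(η). -/

import Mathlib

open MeasureTheory Real

noncomputable def prob {Ω : Type*} [MeasurableSpace Ω] (μ : Measure Ω) {A : Type*}
    (X : Ω → A) (a : A) : ℝ :=
  (μ (X ⁻¹' {a})).toReal

noncomputable def entropy {Ω : Type*} [MeasurableSpace Ω] (μ : Measure Ω) {A : Type*}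
    [Fintype A] (X : Ω → A) : ℝ :=
  ∑ a, Real.negMulLog (prob μ X a)

noncomputable def mutualInfo {Ω : Type*} [MeasurableSpace Ω] (μ : Measure Ω)
    {A B : Type*} [Fintype A] [Fintype B] (X : Ω → A) (Y : Ω → B) : ℝ :=
  entropy μ X + entropy μ Y - entropy μ (fun ω => (X ω, Y ω))

noncomputable def condMutualInfo {Ω : Type*} [MeasurableSpace Ω] (μ : Measure Ω)
    {A B C : Type*} [Fintype A] [Fintype B] [Fintype C]
    (X : Ω → A) (Y : Ω → B) (Z : Ω → C) : ℝ :=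
  entropy μ (fun ω => (X ω, Z ω)) + entropy μ (fun ω => (Y ω, Z ω))
    - entropy μ (fun ω => (X ω, Y ω, Z ω)) - entropy μ Z

/-- `W` and `Y` are conditionally independent given `X` (Markov chain `W → X → Y`). -/
def CondIndepGiven {Ω : Type*} [MeasurableSpace Ω] (μ : Measure Ω) {A B C : Type*}
    (W : Ω → A) (X : Ω → B) (Y : Ω → C) : Prop :=
  ∀ a b c, prob μ (fun ω => (W ω, X ω, Y ω)) (a, b, c) * prob μ X b
    = prob μ (fun ω => (W ω, X ω)) (a, b) * prob μ (fun ω => (X ω, Y ω)) (b, c)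

noncomputable def bsscK (x y1 y2 : Bool) : ℝ :=
  if x = false then (if y2 = false then 1 / 2 else 0)
  else (if y1 = true then 1 / 2 else 0)

def IsBSSC {Ω : Type*} [MeasurableSpace Ω] (μ : Measure Ω) (X Y1 Y2 : Ω → Bool) : Prop :=
  ∀ x y1 y2, prob μ (fun ω => (X ω, Y1 ω, Y2 ω)) (x, y1, y2) = prob μ X x * bsscK x y1 y2

noncomputable def binH (x : ℝ) : ℝ := Real.negMulLog x + Real.negMulLog (1 - x)

noncomputable def fskew (η : ℝ) : ℝ := binH (η / 2) - binH ((1 - η) / 2)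

/-!
`fskew` is concave on `[0, 1/2]` and convex on `[1/2, 1]`. For `0 < η ≤ 1/5` its tangent line
at `η` lies above it on all of `[0, 1]`: on `[0, 1/2]` by concavity; on `[1/2, 1]` because there
it dominates the tangent at `1/5`, which lies above `fskew` at `1/2` and meets it at `1` (this
is where the constant `1/5` comes from), hence lies above the convex arc in between. Averaging
the tangent-line inequality over the `α i` with weights `v i` gives the claim.
-/

open Set

lemma ConcaveOn.le_add_deriv_mul_sub {S : Set ℝ} {f : ℝ → ℝ} {f' x y : ℝ}
    (hf : ConcaveOn ℝ S f) (hx : x ∈ S) (hy : y ∈ S) (hf' : HasDerivAt f f' x) :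
    f y ≤ f x + f' * (y - x) := by
  rcases lt_trichotomy x y with hxy | rfl | hyx
  · have := hf.slope_le_of_hasDerivAt hx hy hxy hf'
    rw [slope_def_field, div_le_iff₀ (sub_pos.2 hxy)] at this
    linarith
  · simp
  · have := hf.le_slope_of_hasDerivAt hy hx hyx hf'
    rw [slope_def_field, le_div_iff₀ (sub_pos.2 hyx)] at this
    linarith

lemma ConcaveOn.add_deriv_mul_sub_le_of_le {S : Set ℝ} {f : ℝ → ℝ} {a b x y z : ℝ}
    (hf : ConcaveOn ℝ S f) (hx : x ∈ S) (hy : y ∈ S) (hxy : x ≤ y) (hyz : y ≤ z)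
    (ha : HasDerivAt f a x) (hb : HasDerivAt f b y) :
    f y + b * (z - y) ≤ f x + a * (z - x) := by
  have tangent_x := hf.le_add_deriv_mul_sub hx hy ha
  have tangent_y := hf.le_add_deriv_mul_sub hy hx hb
  have hba : b * (z - y) ≤ a * (z - y) := by
    rcases hxy.lt_or_eq with hlt | rfl
    -- the sum of the two tangent inequalities reads `0 ≤ (a - b) * (y - x)`
    · exact mul_le_mul_of_nonneg_right (by nlinarith) (sub_nonneg.2 hyz)
    · rw [ha.unique hb]
  linarith

lemma ConvexOn.le_affine_of_mem_Icc {f : ℝ → ℝ} {a b c m y : ℝ}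
    (hf : ConvexOn ℝ (Icc a b) f) (ha : f a ≤ c + m * a) (hb : f b ≤ c + m * b)
    (hy : y ∈ Icc a b) : f y ≤ c + m * y := by
  have hab : a ≤ b := hy.1.trans hy.2
  have hg := hf.sub (((LinearMap.mul ℝ ℝ m).concaveOn (convex_Icc a b)).add_const c)
  have := hg.le_max_of_mem_Icc (left_mem_Icc.2 hab) (right_mem_Icc.2 hab) hy
  simp only [Pi.sub_apply, Pi.add_apply, LinearMap.mul_apply'] at this
  have := this.trans (max_le (by linarith) (by linarith) : _ ≤ (0:ℝ))
  linarith

lemma binH_eq_binEntropy : binH = binEntropy :=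
  funext fun p => (binEntropy_eq_negMulLog_add_negMulLog_one_sub p).symm

lemma fskew_eq_binEntropy : fskew = fun x => binEntropy (x / 2) - binEntropy ((1 - x) / 2) := by
  ext x
  simp only [fskew, binH_eq_binEntropy]

lemma fskew_one : fskew 1 = log 2 := by
  simp [fskew_eq_binEntropy]

lemma continuous_fskew : Continuous fskew := by
  rw [fskew_eq_binEntropy]
  fun_prop

noncomputable def fskewDeriv (x : ℝ) : ℝ :=
  (log (2 - x) - log x + log (1 + x) - log (1 - x)) / 2

lemma hasDerivAt_fskew {x : ℝ} (h0 : 0 < x) (h1 : x < 1) :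
    HasDerivAt fskew (fskewDeriv x) x := by
  have d1 := (hasDerivAt_binEntropy (p := x / 2) (by positivity) (by linarith)).comp x
    ((hasDerivAt_id x).div_const 2)
  have d2 := (hasDerivAt_binEntropy (p := (1 - x) / 2) (by linarith) (by linarith)).comp x
    (((hasDerivAt_const x 1).sub (hasDerivAt_id x)).div_const 2)
  rw [fskew_eq_binEntropy]
  refine (d1.sub d2).congr_deriv ?_
  have e1 : log (1 - x / 2) = log (2 - x) - log 2 := by
    rw [← log_div (by linarith) two_ne_zero]; ring_nf
  have e2 : log (x / 2) = log x - log 2 := log_div h0.ne' two_ne_zero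
  have e3 : log (1 - (1 - x) / 2) = log (1 + x) - log 2 := by
    rw [← log_div (by linarith) two_ne_zero]; ring_nf
  have e4 : log ((1 - x) / 2) = log (1 - x) - log 2 := log_div (by linarith) two_ne_zero
  simp only [e1, e2, e3, e4, fskewDeriv]
  ring

lemma hasDerivAt_fskewDeriv {x : ℝ} (h0 : 0 < x) (h1 : x < 1) :
    HasDerivAt fskewDeriv ((2 * x - 1) / (x * (1 + x) * (1 - x) * (2 - x))) x := by
  have l1 := ((hasDerivAt_id x).const_sub 2).log (by simp; linarith)
  have l2 := (hasDerivAt_id x).log h0.ne'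
  have l3 := ((hasDerivAt_id x).const_add 1).log (by simp; linarith)
  have l4 := ((hasDerivAt_id x).const_sub 1).log (by simp; linarith)
  refine ((((l1.sub l2).add l3).sub l4).div_const 2).congr_deriv ?_
  have : (0:ℝ) < 1 - x := by linarith
  have : (0:ℝ) < 2 - x := by linarith
  simp only [id]
  field_simp
  ring

lemma concaveOn_fskew : ConcaveOn ℝ (Icc 0 (1 / 2)) fskew := by
  refine concaveOn_of_hasDerivWithinAt2_nonpos (f' := fskewDeriv)
    (f'' := fun x => (2 * x - 1) / (x * (1 + x) * (1 - x) * (2 - x))) (convex_Icc _ _)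
    continuous_fskew.continuousOn (fun x hx => ?_) (fun x hx => ?_) (fun x hx => ?_) <;>
    obtain ⟨h0, h1⟩ := interior_Icc (a := (0 : ℝ)) ▸ hx
  · exact (hasDerivAt_fskew h0 (by linarith)).hasDerivWithinAt
  · exact (hasDerivAt_fskewDeriv h0 (by linarith)).hasDerivWithinAt
  · exact div_nonpos_of_nonpos_of_nonneg (by linarith)
      (mul_pos (mul_pos (mul_pos h0 (by linarith)) (by linarith)) (by linarith)).le

lemma convexOn_fskew : ConvexOn ℝ (Icc (1 / 2) 1) fskew := by
  refine convexOn_of_hasDerivWithinAt2_nonneg (f' := fskewDeriv)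
    (f'' := fun x => (2 * x - 1) / (x * (1 + x) * (1 - x) * (2 - x))) (convex_Icc _ _)
    continuous_fskew.continuousOn (fun x hx => ?_) (fun x hx => ?_) (fun x hx => ?_) <;>
    obtain ⟨h0, h1⟩ := interior_Icc (a := (1 / 2 : ℝ)) ▸ hx
  · exact (hasDerivAt_fskew (by linarith) h1).hasDerivWithinAt
  · exact (hasDerivAt_fskewDeriv (by linarith) h1).hasDerivWithinAt
  · exact div_nonneg (by linarith)
      (mul_pos (mul_pos (mul_pos (by linarith) (by linarith)) (by linarith)) (by linarith)).le

lemma fskew_tangent_at_fifth_eval_one :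
    fskew (1 / 5) + fskewDeriv (1 / 5) * (1 - 1 / 5) = fskew 1 := by
  have l4 : log 4 = 2 * log 2 := by
    rw [show (4:ℝ) = 2 ^ 2 by norm_num, log_pow]; norm_num
  have l6 : log 6 = log 2 + log 3 := by
    rw [show (6:ℝ) = 2 * 3 by norm_num, log_mul two_ne_zero three_ne_zero]
  have l9 : log 9 = 2 * log 3 := by
    rw [show (9:ℝ) = 3 ^ 2 by norm_num, log_pow]; norm_num
  have l10 : log 10 = log 2 + log 5 := by
    rw [show (10:ℝ) = 2 * 5 by norm_num, log_mul two_ne_zero (by norm_num)]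
  rw [fskew_one]
  norm_num [fskew, binH, fskewDeriv, negMulLog, log_div, log_inv, l4, l6, l9, l10]
  ring

lemma fskew_le_tangent {η x : ℝ} (hη₀ : 0 < η) (hη : η ≤ 1 / 5) (hx : x ∈ Icc (0 : ℝ) 1) :
    fskew x ≤ fskew η + fskewDeriv η * (x - η) := by
  have hηS : η ∈ Icc (0 : ℝ) (1 / 2) := ⟨hη₀.le, by linarith⟩
  have hfifthS : (1 / 5 : ℝ) ∈ Icc (0 : ℝ) (1 / 2) := ⟨by norm_num, by norm_num⟩
  have hd : ∀ {y : ℝ}, y ∈ Icc (0 : ℝ) (1 / 2) → 0 < y → HasDerivAt fskew (fskewDeriv y) y :=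
    fun hy hy0 => hasDerivAt_fskew hy0 (by linarith [hy.2])
  rcases le_total x (1 / 2) with hx₂ | hx₂
  · exact concaveOn_fskew.le_add_deriv_mul_sub hηS ⟨hx.1, hx₂⟩ (hd hηS hη₀)
  have hfifth : fskew x ≤ fskew (1 / 5) + fskewDeriv (1 / 5) * (x - 1 / 5) := by
    have hhalf := concaveOn_fskew.le_add_deriv_mul_sub hfifthS (right_mem_Icc.2 (by norm_num))
      (hd hfifthS (by norm_num))
    have hone := fskew_tangent_at_fifth_eval_one.ge
    have := convexOn_fskew.le_affine_of_mem_Icc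
      (c := fskew (1 / 5) - fskewDeriv (1 / 5) * (1 / 5)) (m := fskewDeriv (1 / 5))
      (by linarith) (by linarith) ⟨hx₂, hx.2⟩
    linarith
  exact hfifth.trans (concaveOn_fskew.add_deriv_mul_sub_le_of_le hηS hfifthS hη (by linarith)
    (hd hηS hη₀) (hd hfifthS (by norm_num)))

lemma Finset.sum_mul_le_of_le_tangent {ι : Type*} {s : Finset ι} {v α : ι → ℝ} {f : ℝ → ℝ}
    {η m : ℝ} (hsum : ∑ i ∈ s, v i = 1) (hη : η = ∑ i ∈ s, v i * α i)
    (hv : ∀ i ∈ s, 0 ≤ v i) (hf : ∀ i ∈ s, 0 < v i → f (α i) ≤ f η + m * (α i - η)) :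
    ∑ i ∈ s, v i * f (α i) ≤ f η :=
  calc ∑ i ∈ s, v i * f (α i)
      ≤ ∑ i ∈ s, v i * (f η + m * (α i - η)) := by
        refine Finset.sum_le_sum fun i hi => ?_
        rcases (hv i hi).eq_or_lt with h | h
        · simp [← h]
        · exact mul_le_mul_of_nonneg_left (hf i hi h) h.le
    _ = (f η - m * η) * ∑ i ∈ s, v i + m * ∑ i ∈ s, v i * α i := by
        rw [Finset.mul_sum, Finset.mul_sum, ← Finset.sum_add_distrib]
        exact Finset.sum_congr rfl fun i _ => by ring
    _ = f η := by rw [hsum, ← hη]; ring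

/-- If `(v_i)` is a finite probability vector, `α_i ∈ [0,1]`, and
`η = Σ_i v_i α_i ≤ 1/5`, then `Σ_i v_i f(α_i) ≤ f(η)`. -/
theorem stmt10 {ι : Type*} (s : Finset ι) (v α : ι → ℝ)
    (hv : ∀ i ∈ s, 0 ≤ v i) (hsum : ∑ i ∈ s, v i = 1)
    (hα : ∀ i ∈ s, α i ∈ Set.Icc (0 : ℝ) 1)
    (η : ℝ) (hη : η = ∑ i ∈ s, v i * α i) (hle : η ≤ 1 / 5) :
    ∑ i ∈ s, v i * fskew (α i) ≤ fskew η := by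
  have hterm : ∀ i ∈ s, 0 ≤ v i * α i := fun i hi => mul_nonneg (hv i hi) (hα i hi).1
  rcases (hη ▸ Finset.sum_nonneg hterm : 0 ≤ η).eq_or_lt with hη₀ | hη₀
  · -- `fskew` has infinite slope at `0`; but `η = 0` forces `α i = 0` wherever `v i > 0`.
    refine Finset.sum_mul_le_of_le_tangent (m := 0) hsum hη hv fun i hi hvi => ?_
    have : v i * α i = 0 := (Finset.sum_eq_zero_iff_of_nonneg hterm).1 (hη ▸ hη₀.symm) i hi
    rw [(mul_eq_zero.1 this).resolve_left hvi.ne', ← hη₀]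
    simp
  · exact Finset.sum_mul_le_of_le_tangent hsum hη hv fun i hi _ =>
      fskew_le_tangent hη₀ hle (hα i hi)
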